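/- arXiv:1202.1684 — 4 statements merged into one kernel-verified Lean document; each statement's English description precedes it below -/
import Mathlib

section
/- Let C1, C2 > 0 be constants, γ = 7/6, and suppose the real number a ≥ max(288^6, (8·max(C1,C2))^168). Suppose p, q ≥ 0 satisfy p ≤ a^((5/2)(1-γ)) and q ≤ a^((3/2)(1-γ)). Let b = a^γ, p' = C1·(a^(γ-1))^2·(p^2 + (a^(1-γ))^6 + (a^(1-γ))^2·q^2), and q' = C2·[(a^(γ-1))^2·(p^2 + (a^(1-γ))^6 + (a^(1-γ))^2·q^2) + a^(γ-1)·(p·q + (a^(1-γ))^2·q + (a^(1-γ))^6) + (q^2 + (a^(1-γ))^2)]. Then p' ≤ b^((5/2)(1-γ)) and q' ≤ b^((3/2)(1-γ)). -/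
/-!
With `v = a ^ (-1/72)` every quantity becomes an integer power of `v`: `a ^ (1 - γ) = v ^ 12`,
`a ^ (γ - 1) = v ^ (-12)`, the hypotheses read `p ≤ v ^ 30`, `q ≤ v ^ 18`, and the targets are
`v ^ 35` and `v ^ 21`. Each term of `p'` (resp. `q'`) is then at most `v ^ 36` (resp. `v ^ 24`), and
the spare power of `v` absorbs the constant because `a ≥ (8 max C1 C2) ^ 168` gives
`8 max C1 C2 ≤ a ^ (1/72) = v⁻¹`.
-/

open Real

lemma le_rpow_inv_of_pow_le {x a : ℝ} {m n : ℕ} (hx : 0 ≤ x) (ha : 1 ≤ a) (hm : 0 < m)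
    (hmn : m ≤ n) (h : x ^ n ≤ a) : x ≤ a ^ ((m : ℝ)⁻¹) := by
  rw [le_rpow_inv_iff_of_pos hx (by linarith) (by exact_mod_cast hm), rpow_natCast]
  rcases le_total x 1 with hx1 | hx1
  · exact (pow_le_one₀ hx hx1).trans ha
  · exact (pow_le_pow_right₀ hx1 hmn).trans h

section RecursionBounds

variable {v p q C : ℝ}

lemma sq_add_pow_six_add_sq_mul_sq_le (hv0 : 0 < v) (hv1 : v ≤ 1) (hp0 : 0 ≤ p)
    (hp : p ≤ v ^ 30) (hq0 : 0 ≤ q) (hq : q ≤ v ^ 18) :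
    p ^ 2 + (v ^ 12) ^ 6 + (v ^ 12) ^ 2 * q ^ 2 ≤ 3 * v ^ 60 := by
  have hp2 : p ^ 2 ≤ (v ^ 30) ^ 2 := pow_le_pow_left₀ hp0 hp 2
  have hq2 : q ^ 2 ≤ (v ^ 18) ^ 2 := pow_le_pow_left₀ hq0 hq 2
  have h72 : v ^ 72 ≤ v ^ 60 := pow_le_pow_of_le_one hv0.le hv1 (by norm_num)
  nlinarith [pow_pos hv0 24]

lemma p_recursion_bound_le (hv0 : 0 < v) (hv1 : v ≤ 1) (hp0 : 0 ≤ p) (hp : p ≤ v ^ 30)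
    (hq0 : 0 ≤ q) (hq : q ≤ v ^ 18) (hC : 0 ≤ C) (hCv : 3 * C * v ≤ 1) :
    C * ((v ^ 12)⁻¹) ^ 2 * (p ^ 2 + (v ^ 12) ^ 6 + (v ^ 12) ^ 2 * q ^ 2) ≤ v ^ 35 := by
  calc C * ((v ^ 12)⁻¹) ^ 2 * (p ^ 2 + (v ^ 12) ^ 6 + (v ^ 12) ^ 2 * q ^ 2)
      ≤ C * ((v ^ 12)⁻¹) ^ 2 * (3 * v ^ 60) := by
        gcongr; exact sq_add_pow_six_add_sq_mul_sq_le hv0 hv1 hp0 hp hq0 hq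
    _ = 3 * C * v * v ^ 35 := by field_simp
    _ ≤ v ^ 35 := by nlinarith [pow_pos hv0 35]

lemma q_recursion_bound_le (hv0 : 0 < v) (hv1 : v ≤ 1) (hp0 : 0 ≤ p) (hp : p ≤ v ^ 30)
    (hq0 : 0 ≤ q) (hq : q ≤ v ^ 18) (hC : 0 ≤ C) (hCv : 8 * C * v ^ 3 ≤ 1) :
    C * (((v ^ 12)⁻¹) ^ 2 * (p ^ 2 + (v ^ 12) ^ 6 + (v ^ 12) ^ 2 * q ^ 2) +
      (v ^ 12)⁻¹ * (p * q + (v ^ 12) ^ 2 * q + (v ^ 12) ^ 6) + (q ^ 2 + (v ^ 12) ^ 2))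
      ≤ v ^ 21 := by
  have hpq : p * q ≤ v ^ 30 * v ^ 18 := mul_le_mul hp hq hq0 (by positivity)
  have hq2 : q ^ 2 ≤ (v ^ 18) ^ 2 := pow_le_pow_left₀ hq0 hq 2
  have hmono : ∀ {m n : ℕ}, m ≤ n → v ^ n ≤ v ^ m := pow_le_pow_of_le_one hv0.le hv1
  have h1 : ((v ^ 12)⁻¹) ^ 2 * (p ^ 2 + (v ^ 12) ^ 6 + (v ^ 12) ^ 2 * q ^ 2) ≤ 3 * v ^ 24 :=
    calc _ ≤ ((v ^ 12)⁻¹) ^ 2 * (3 * v ^ 60) := by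
          gcongr; exact sq_add_pow_six_add_sq_mul_sq_le hv0 hv1 hp0 hp hq0 hq
      _ = 3 * v ^ 36 := by field_simp
      _ ≤ 3 * v ^ 24 := by gcongr 3 * ?_; exact hmono (by norm_num)
  have h2 : (v ^ 12)⁻¹ * (p * q + (v ^ 12) ^ 2 * q + (v ^ 12) ^ 6) ≤ 3 * v ^ 24 :=
    calc _ ≤ (v ^ 12)⁻¹ * (v ^ 30 * v ^ 18 + (v ^ 12) ^ 2 * v ^ 18 + (v ^ 12) ^ 6) := by
          gcongr
      _ = v ^ 36 + v ^ 30 + v ^ 60 := by field_simp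
      _ ≤ 3 * v ^ 24 := by
          linarith [hmono (show 24 ≤ 36 by norm_num), hmono (show 24 ≤ 30 by norm_num),
            hmono (show 24 ≤ 60 by norm_num)]
  have h3 : q ^ 2 + (v ^ 12) ^ 2 ≤ 2 * v ^ 24 := by
    have h36 : (v ^ 18) ^ 2 ≤ v ^ 24 := by rw [← pow_mul]; exact hmono (by norm_num)
    linarith [show (v ^ 12) ^ 2 = v ^ 24 by ring]
  calc _ ≤ C * (8 * v ^ 24) := by gcongr; linarith
    _ = 8 * C * v ^ 3 * v ^ 21 := by ring
    _ ≤ v ^ 21 := by nlinarith [pow_pos hv0 21]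

end RecursionBounds

theorem stmt_3 (C1 C2 : ℝ) (hC1 : 0 < C1) (hC2 : 0 < C2)
    (γ : ℝ) (hγ : γ = 7 / 6)
    (a : ℝ) (ha : a ≥ max (288 ^ 6) ((8 * max C1 C2) ^ 168))
    (p q : ℝ) (hp0 : 0 ≤ p) (hq0 : 0 ≤ q)
    (hp : p ≤ a ^ ((5 / 2) * (1 - γ))) (hq : q ≤ a ^ ((3 / 2) * (1 - γ)))
    (b : ℝ) (hb : b = a ^ γ)
    (p' : ℝ)
    (hp' : p' = C1 * (a ^ (γ - 1)) ^ 2 *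
      (p ^ 2 + (a ^ (1 - γ)) ^ 6 + (a ^ (1 - γ)) ^ 2 * q ^ 2))
    (q' : ℝ)
    (hq' : q' = C2 * ((a ^ (γ - 1)) ^ 2 *
        (p ^ 2 + (a ^ (1 - γ)) ^ 6 + (a ^ (1 - γ)) ^ 2 * q ^ 2) +
      a ^ (γ - 1) * (p * q + (a ^ (1 - γ)) ^ 2 * q + (a ^ (1 - γ)) ^ 6) +
      (q ^ 2 + (a ^ (1 - γ)) ^ 2))) :
    p' ≤ b ^ ((5 / 2) * (1 - γ)) ∧ q' ≤ b ^ ((3 / 2) * (1 - γ)) := by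
  have ha1 : 1 ≤ a := le_trans (by norm_num) ((le_max_left _ _).trans ha)
  have ha0 : 0 < a := one_pos.trans_le ha1
  set v := a ^ (-(72 : ℝ)⁻¹) with hv
  have hv0 : 0 < v := rpow_pos_of_pos ha0 _
  have hv1 : v ≤ 1 := rpow_le_one_of_one_le_of_nonpos ha1 (by norm_num)
  have hv_pow (n : ℕ) : v ^ n = a ^ (-(72 : ℝ)⁻¹ * n) := (rpow_mul_natCast ha0.le _ n).symm
  have hMv : 8 * max C1 C2 * v ≤ 1 := by
    rw [hv, rpow_neg ha0.le]
    refine mul_inv_le_one_of_le₀ (le_rpow_inv_of_pow_le (by positivity) ha1 (by norm_num)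
      (show 72 ≤ 168 by norm_num) ((le_max_right _ _).trans ha)) (by positivity)
  have hv3 : v ^ 3 ≤ v := by
    simpa using pow_le_pow_of_le_one hv0.le hv1 (show 1 ≤ 3 by norm_num)
  have hC1v : 3 * C1 * v ≤ 1 := by nlinarith [le_max_left C1 C2]
  have hC2v : 8 * C2 * v ^ 3 ≤ 1 := by nlinarith [le_max_right C1 C2]
  have hdecay : a ^ (1 - γ) = v ^ 12 := by rw [hv_pow, hγ]; norm_num
  have hgrowth : a ^ (γ - 1) = (v ^ 12)⁻¹ := by rw [hv_pow, ← rpow_neg ha0.le, hγ]; norm_num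
  have hp30 : a ^ ((5 / 2) * (1 - γ)) = v ^ 30 := by rw [hv_pow, hγ]; norm_num
  have hq18 : a ^ ((3 / 2) * (1 - γ)) = v ^ 18 := by rw [hv_pow, hγ]; norm_num
  have hb35 : b ^ ((5 / 2) * (1 - γ)) = v ^ 35 := by
    rw [hb, ← rpow_mul ha0.le, hv_pow, hγ]; norm_num
  have hb21 : b ^ ((3 / 2) * (1 - γ)) = v ^ 21 := by
    rw [hb, ← rpow_mul ha0.le, hv_pow, hγ]; norm_num
  rw [hp30] at hp; rw [hq18] at hq
  rw [hp', hq', hb35, hb21, hdecay, hgrowth]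
  exact ⟨p_recursion_bound_le hv0 hv1 hp0 hp hq0 hq hC1.le hC1v,
    q_recursion_bound_le hv0 hv1 hp0 hp hq0 hq hC2.le hC2v⟩
end

section
/- Let C1, C2 be two non-parallel intersecting solid cylinders of radius 1 in ℝ³ with axes l1, l2, and let [x_i, y_i] = φ_i(C1 ∩ C2) as above. If the Hausdorff distance between [x1,y1] and [x2,y2] is at most 2, then the Hausdorff distance between the endpoint sets {x1, y1} and {x2, y2} is at most 2√2. -/
/-!
Project everything onto the line through `x₁, y₁`, with unit direction `u`. If `x₂` were farther
than `2√2` from both `x₁` and `y₁` while within `2` of `[x₁, y₁]`, Pythagoras forces the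
coordinate of `x₂` to lie strictly inside the segment, more than `2` away from both ends. The
hyperplane through `x₂` orthogonal to `u` then separates `x₁` from `y₁`, and `[x₂, y₂]` lies in
one of its closed half-spaces, so one of `x₁, y₁` is farther than `2` from `[x₂, y₂]`.
-/

open Metric Set
open scoped RealInnerProductSpace

lemma lt_and_lt_sub_of_sq {P γ c s r : ℝ} (hP : 0 ≤ P) (hs₀ : 0 ≤ s) (hsc : s ≤ c)
    (hfar₀ : 2 * r ^ 2 < P + γ ^ 2) (hfar₁ : 2 * r ^ 2 < P + (γ - c) ^ 2)
    (hnear : P + (γ - s) ^ 2 ≤ r ^ 2) : r < γ ∧ γ < c - r := by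
  have hPr : P ≤ r ^ 2 := by nlinarith [sq_nonneg (γ - s)]
  have h₀ : |r| < |γ| := sq_lt_sq.mp (by linarith)
  have h₁ : |r| < |γ - c| := sq_lt_sq.mp (by linarith)
  have hs : |γ - s| ≤ |r| := sq_le_sq.mp (by linarith)
  obtain ⟨hs₁, hs₂⟩ := abs_le.mp hs
  have hr := le_abs_self r
  constructor
  · rcases abs_cases γ with ⟨h, -⟩ | ⟨h, -⟩ <;> linarith
  · rcases abs_cases (γ - c) with ⟨h, -⟩ | ⟨h, -⟩ <;> linarith

section Segments

variable {E : Type*} [NormedAddCommGroup E] [InnerProductSpace ℝ E]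

lemma isCompact_segment (x y : E) : IsCompact (segment ℝ x y) := by
  rw [segment_eq_image']
  exact isCompact_Icc.image (by fun_prop)

lemma hausdorffEDist_segment_ne_top (x₁ y₁ x₂ y₂ : E) :
    hausdorffEDist (segment ℝ x₁ y₁) (segment ℝ x₂ y₂) ≠ ⊤ :=
  hausdorffEDist_ne_top_of_nonempty_of_bounded ⟨x₁, left_mem_segment ℝ x₁ y₁⟩
    ⟨x₂, left_mem_segment ℝ x₂ y₂⟩ (isCompact_segment x₁ y₁).isBounded
    (isCompact_segment x₂ y₂).isBounded

/-- Pythagoras along the line `a + ℝ u`; the first summand is the squared distance from `z` to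
that line. -/
lemma dist_add_smul_sq {u : E} (hu : ‖u‖ = 1) (z a : E) (t : ℝ) :
    dist z (a + t • u) ^ 2 = (‖z - a‖ ^ 2 - ⟪z - a, u⟫ ^ 2) + (⟪z - a, u⟫ - t) ^ 2 := by
  rw [dist_eq_norm, show z - (a + t • u) = (z - a) - t • u by abel, norm_sub_sq_real,
    real_inner_smul_right, norm_smul, hu, Real.norm_eq_abs, mul_one, sq_abs]
  ring

lemma inner_sq_le_norm_sq {u : E} (hu : ‖u‖ = 1) (z : E) : ⟪z, u⟫ ^ 2 ≤ ‖z‖ ^ 2 := by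
  have := abs_real_inner_le_norm z u
  rw [hu, mul_one] at this
  exact sq_le_sq' (abs_le.mp this).1 (abs_le.mp this).2

lemma inner_sub_mem_uIcc_of_mem_segment (a u : E) {x y z : E} (hz : z ∈ segment ℝ x y) :
    ⟪z - a, u⟫ ∈ uIcc ⟪x - a, u⟫ ⟪y - a, u⟫ := by
  obtain ⟨α, β, hα, hβ, hαβ, rfl⟩ := hz
  rw [← segment_eq_uIcc]
  refine ⟨α, β, hα, hβ, hαβ, ?_⟩
  have : α • x + β • y - a = α • (x - a) + β • (y - a) :=
    calc α • x + β • y - a = α • x + β • y - (α + β) • a := by rw [hαβ, one_smul]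
      _ = α • (x - a) + β • (y - a) := by module
  rw [this, inner_add_left, real_inner_smul_left, real_inner_smul_left, smul_eq_mul, smul_eq_mul]

lemma le_infDist_segment_of_le_inner {u a x y : E} {d : ℝ} (hu : ‖u‖ = 1)
    (hx : d ≤ ⟪x - a, u⟫) (hy : d ≤ ⟪y - a, u⟫) :
    d ≤ infDist a (segment ℝ x y) := by
  refine (le_infDist ⟨x, left_mem_segment ℝ x y⟩).2 fun z hz => ?_
  calc d ≤ min ⟪x - a, u⟫ ⟪y - a, u⟫ := le_min hx hy
    _ ≤ ⟪z - a, u⟫ := (inner_sub_mem_uIcc_of_mem_segment a u hz).1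
    _ ≤ ‖z - a‖ := by simpa [hu] using real_inner_le_norm (z - a) u
    _ = dist a z := by rw [dist_comm, dist_eq_norm]

lemma infDist_pair_le_of_eq_add_smul {u x₁ y₁ x₂ y₂ : E} {c r : ℝ} (hu : ‖u‖ = 1) (hc : 0 ≤ c)
    (hy₁_eq : y₁ = x₁ + c • u)
    (hx₂ : infDist x₂ (segment ℝ x₁ y₁) ≤ r) (hx₁ : infDist x₁ (segment ℝ x₂ y₂) ≤ r)
    (hy₁ : infDist y₁ (segment ℝ x₂ y₂) ≤ r) :
    infDist x₂ {x₁, y₁} ≤ √2 * r := by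
  have hr : 0 ≤ r := infDist_nonneg.trans hx₂
  by_contra! hfar
  have hfar_sq {w : E} (hw : w ∈ ({x₁, y₁} : Set E)) : 2 * r ^ 2 < dist x₂ w ^ 2 := by
    have h := hfar.trans_le (infDist_le_dist_of_mem hw)
    calc 2 * r ^ 2 = (√2 * r) ^ 2 := by rw [mul_pow, Real.sq_sqrt zero_le_two]
      _ < dist x₂ w ^ 2 := by gcongr
  obtain ⟨q, hq, hx₂q⟩ := (isCompact_segment x₁ y₁).exists_infDist_eq_dist
    ⟨x₁, left_mem_segment ℝ x₁ y₁⟩ x₂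
  obtain ⟨θ, ⟨hθ₀, hθ₁⟩, rfl⟩ : ∃ θ ∈ Icc (0 : ℝ) 1, x₁ + θ • (y₁ - x₁) = q := by
    rwa [segment_eq_image'] at hq
  have hq_eq : x₁ + θ • (y₁ - x₁) = x₁ + (θ * c) • u := by
    rw [hy₁_eq, add_sub_cancel_left, smul_smul]
  have hnear : dist x₂ (x₁ + (θ * c) • u) ^ 2 ≤ r ^ 2 := by
    rw [← hq_eq, ← hx₂q]
    gcongr
    exact infDist_nonneg
  rw [dist_add_smul_sq hu] at hnear
  have hfar₀ := hfar_sq (mem_insert x₁ {y₁})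
  have hfar₁ := hfar_sq (mem_insert_of_mem x₁ rfl)
  rw [← add_zero x₁, ← zero_smul ℝ u, dist_add_smul_sq hu, sub_zero] at hfar₀
  rw [hy₁_eq, dist_add_smul_sq hu] at hfar₁
  obtain ⟨hγ₀, hγ₁⟩ : r < ⟪x₂ - x₁, u⟫ ∧ ⟪x₂ - x₁, u⟫ < c - r :=
    lt_and_lt_sub_of_sq (sub_nonneg.mpr (inner_sq_le_norm_sq hu _)) (by positivity)
      (mul_le_of_le_one_left hc hθ₁) hfar₀ hfar₁ hnear
  -- `[x₂, y₂]` lies on one side of the hyperplane through `x₂` orthogonal to `u`, which is at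
  -- distance `> r` from both `x₁` and `y₁`.
  rcases le_total ⟪x₂ - x₁, u⟫ ⟪y₂ - x₁, u⟫ with hle | hle
  · linarith [le_infDist_segment_of_le_inner hu le_rfl hle]
  · have h_refl (z : E) : ⟪z - y₁, -u⟫ = c - ⟪z - x₁, u⟫ := by
      rw [hy₁_eq, inner_neg_right, show z - (x₁ + c • u) = (z - x₁) - c • u by abel, inner_sub_left,
        real_inner_smul_left, real_inner_self_eq_norm_sq, hu]
      ring
    have := le_infDist_segment_of_le_inner (a := y₁) (x := x₂) (y := y₂)
      (d := c - ⟪x₂ - x₁, u⟫) (norm_neg u ▸ hu) (h_refl x₂).ge (by rw [h_refl]; linarith)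
    linarith

lemma infDist_pair_le_sqrt_two_mul {x₁ y₁ x₂ y₂ : E} {r : ℝ}
    (hx₂ : infDist x₂ (segment ℝ x₁ y₁) ≤ r) (hx₁ : infDist x₁ (segment ℝ x₂ y₂) ≤ r)
    (hy₁ : infDist y₁ (segment ℝ x₂ y₂) ≤ r) :
    infDist x₂ {x₁, y₁} ≤ √2 * r := by
  rcases eq_or_ne y₁ x₁ with rfl | hne
  · rw [segment_same] at hx₂
    rw [pair_eq_singleton]
    exact hx₂.trans <|
      le_mul_of_one_le_left (infDist_nonneg.trans hx₂) (Real.one_le_sqrt.2 one_le_two)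
  · have hd : y₁ - x₁ ≠ 0 := sub_ne_zero.mpr hne
    refine infDist_pair_le_of_eq_add_smul (norm_smul_inv_norm (𝕜 := ℝ) hd)
      (norm_nonneg (y₁ - x₁)) ?_ hx₂ hx₁ hy₁
    rw [smul_smul, RCLike.ofReal_real_eq_id, id, mul_inv_cancel₀ (norm_ne_zero_iff.mpr hd),
      one_smul, add_sub_cancel]

lemma infDist_pair_le_of_forall_infDist_segment_le {x₁ y₁ x₂ y₂ : E} {r : ℝ}
    (h₁₂ : ∀ z ∈ segment ℝ x₁ y₁, infDist z (segment ℝ x₂ y₂) ≤ r)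
    (h₂₁ : ∀ z ∈ segment ℝ x₂ y₂, infDist z (segment ℝ x₁ y₁) ≤ r) :
    ∀ w ∈ ({x₂, y₂} : Set E), infDist w {x₁, y₁} ≤ √2 * r := by
  rintro w (rfl | rfl)
  · exact infDist_pair_le_sqrt_two_mul (h₂₁ _ (left_mem_segment ℝ _ _))
      (h₁₂ _ (left_mem_segment ℝ _ _)) (h₁₂ _ (right_mem_segment ℝ _ _))
  · rw [segment_symm ℝ x₂] at h₁₂
    exact infDist_pair_le_sqrt_two_mul (h₂₁ _ (right_mem_segment ℝ _ _))
      (h₁₂ _ (left_mem_segment ℝ _ _)) (h₁₂ _ (right_mem_segment ℝ _ _))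

lemma hausdorffDist_pair_le_sqrt_two_mul {x₁ y₁ x₂ y₂ : E} {r : ℝ}
    (h : hausdorffDist (segment ℝ x₁ y₁) (segment ℝ x₂ y₂) ≤ r) :
    hausdorffDist {x₁, y₁} {x₂, y₂} ≤ √2 * r := by
  have h₁₂ (z) (hz : z ∈ segment ℝ x₁ y₁) : infDist z (segment ℝ x₂ y₂) ≤ r :=
    (infDist_le_hausdorffDist_of_mem hz (hausdorffEDist_segment_ne_top _ _ _ _)).trans h
  have h₂₁ (z) (hz : z ∈ segment ℝ x₂ y₂) : infDist z (segment ℝ x₁ y₁) ≤ r :=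
    (infDist_le_hausdorffDist_of_mem hz (hausdorffEDist_segment_ne_top _ _ _ _)).trans
      (hausdorffDist_comm.trans_le h)
  have hr : 0 ≤ r := hausdorffDist_nonneg.trans h
  exact hausdorffDist_le_of_infDist (by positivity)
    (infDist_pair_le_of_forall_infDist_segment_le h₂₁ h₁₂)
    (infDist_pair_le_of_forall_infDist_segment_le h₁₂ h₂₁)

end Segments

theorem stmt_8_general
    (x1 y1 x2 y2 : EuclideanSpace ℝ (Fin 3))
    (hHaus : Metric.hausdorffDist (segment ℝ x1 y1) (segment ℝ x2 y2) ≤ 2) :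
    Metric.hausdorffDist ({x1, y1} : Set (EuclideanSpace ℝ (Fin 3)))
      ({x2, y2} : Set (EuclideanSpace ℝ (Fin 3))) ≤ 2 * Real.sqrt 2 :=
  mul_comm (√2) 2 ▸ hausdorffDist_pair_le_sqrt_two_mul hHaus

theorem stmt_8
    (p1 v1 p2 v2 : EuclideanSpace ℝ (Fin 3))
    (hv1 : v1 ≠ 0) (hv2 : v2 ≠ 0)
    (hnonpar : ∀ c : ℝ, v2 ≠ c • v1)
    (L1 L2 : Set (EuclideanSpace ℝ (Fin 3)))
    (hL1 : L1 = Set.range fun t : ℝ => p1 + t • v1)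
    (hL2 : L2 = Set.range fun t : ℝ => p2 + t • v2)
    (C1 C2 : Set (EuclideanSpace ℝ (Fin 3)))
    (hC1 : C1 = {z | Metric.infDist z L1 ≤ 1})
    (hC2 : C2 = {z | Metric.infDist z L2 ≤ 1})
    (hinter : (C1 ∩ C2).Nonempty)
    (φ1 φ2 : EuclideanSpace ℝ (Fin 3) → EuclideanSpace ℝ (Fin 3))
    (hφ1 : ∀ z, φ1 z ∈ L1 ∧ dist z (φ1 z) = Metric.infDist z L1)
    (hφ2 : ∀ z, φ2 z ∈ L2 ∧ dist z (φ2 z) = Metric.infDist z L2)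
    (x1 y1 x2 y2 : EuclideanSpace ℝ (Fin 3))
    (hseg1 : φ1 '' (C1 ∩ C2) = segment ℝ x1 y1)
    (hseg2 : φ2 '' (C1 ∩ C2) = segment ℝ x2 y2)
    (hHaus : Metric.hausdorffDist (segment ℝ x1 y1) (segment ℝ x2 y2) ≤ 2) :
    Metric.hausdorffDist ({x1, y1} : Set (EuclideanSpace ℝ (Fin 3)))
      ({x2, y2} : Set (EuclideanSpace ℝ (Fin 3))) ≤ 2 * Real.sqrt 2 :=
  stmt_8_general x1 y1 x2 y2 hHaus
end

section
/- Let C1, C2 ⊂ ℝ³ be two solid cylinders of radius 1, and let η : [0,1] → C1 ∪ C2 be a continuous curve with dist(η(0), η(1)) ≥ a/10 for some a ≥ 288^6. Then there exist a line l ⊂ ℝ³ and times t1 < t2 in [0,1] such that dist(η(t1), η(t2)) ≥ a/100 and η([t1, t2]) ⊆ B(l, 4), the closed 4-neighborhood of l. -/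
/-!
Let `K` be the set of times at which `η` lies in both cylinders. On an interval avoiding `K` the
curve stays in a single cylinder, by connectedness. So either such an arc already has
displacement `≥ a/100`, or the first and last times `α, β` of `K` satisfy
`|η α - η β| ≥ 2a/25` and every `η t`, `t ∈ [α, β]`, is `a/100`-close to `C₁ ∩ C₂`.
If the axes make a small angle `θ` (`a sin θ < 100`), such points of `C₂` lie within `4` of the
axis of `C₁`. Otherwise `C₁ ∩ C₂` has length `≤ 4 / sin θ ≤ a/25` along each axis, so the long
chord from `η α` to `η β` is nearly parallel to both axes and the line through it works.
-/

open Metric Set RealInnerProductSpace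

section Tubes

variable {E : Type*} [NormedAddCommGroup E] [InnerProductSpace ℝ E]

/-- For a unit vector `e`, `perp e w` is the component of `w` orthogonal to `e`, so `tube p e r`
is the solid cylinder of radius `r` around `line p e`. -/
noncomputable def perp (e : E) : E →L[ℝ] E :=
  ContinuousLinearMap.id ℝ E - (innerSL ℝ e).smulRight e

def line (p v : E) : Set E := range fun t : ℝ => p + t • v

def tube (p e : E) (r : ℝ) : Set E := {z | ‖perp e (z - p)‖ ≤ r}

theorem perp_apply (e w : E) : perp e w = w - ⟪e, w⟫ • e := rfl

theorem perp_sub_eq (e e₂ b p₂ z w : E) :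
    perp e (z - b) = perp e (w - b) + ⟪e₂, z - w⟫ • perp e e₂
      + perp e (perp e₂ (z - p₂) - perp e₂ (w - p₂)) := by
  rw [← map_smul, ← map_add, ← map_add]
  congr 1
  simp only [perp_apply, inner_sub_right]
  module

variable {e e₁ e₂ : E}

theorem norm_perp_sq (he : ‖e‖ = 1) (w : E) : ‖perp e w‖ ^ 2 = ‖w‖ ^ 2 - ⟪e, w⟫ ^ 2 := by
  rw [perp_apply, norm_sub_sq_real, norm_smul, he, real_inner_smul_right, Real.norm_eq_abs,
    mul_one, sq_abs, real_inner_comm w e]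
  ring

theorem norm_perp_le (he : ‖e‖ = 1) (w : E) : ‖perp e w‖ ≤ ‖w‖ :=
  (sq_le_sq₀ (norm_nonneg _) (norm_nonneg _)).1 <| by
    rw [norm_perp_sq he]; linarith [sq_nonneg ⟪e, w⟫]

theorem perp_self (he : ‖e‖ = 1) : perp e e = 0 := by
  rw [perp_apply, real_inner_self_eq_norm_sq, he, one_pow, one_smul, sub_self]

theorem norm_perp_comm (he₁ : ‖e₁‖ = 1) (he₂ : ‖e₂‖ = 1) : ‖perp e₁ e₂‖ = ‖perp e₂ e₁‖ :=
  (sq_eq_sq₀ (norm_nonneg _) (norm_nonneg _)).1 <| by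
    rw [norm_perp_sq he₁, norm_perp_sq he₂, he₁, he₂, real_inner_comm]

theorem norm_le_abs_inner_add_norm_perp (he : ‖e‖ = 1) (w : E) : ‖w‖ ≤ |⟪e, w⟫| + ‖perp e w‖ :=
  calc ‖w‖ = ‖⟪e, w⟫ • e + perp e w‖ := by rw [perp_apply, add_sub_cancel]
    _ ≤ |⟪e, w⟫| + ‖perp e w‖ := by
      grw [norm_add_le, norm_smul, he, Real.norm_eq_abs, mul_one]

theorem infDist_line (he : ‖e‖ = 1) (p z : E) : infDist z (line p e) = ‖perp e (z - p)‖ := by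
  refine le_antisymm ?_ ((le_infDist (s := line p e) ⟨p + (0 : ℝ) • e, 0, rfl⟩).2 ?_)
  · refine (infDist_le_dist_of_mem (s := line p e) ⟨⟪e, z - p⟫, rfl⟩).trans_eq ?_
    rw [dist_eq_norm, perp_apply, sub_sub]
  · rintro _ ⟨t, rfl⟩
    calc ‖perp e (z - p)‖ = ‖perp e (z - (p + t • e))‖ := by
          rw [sub_add_eq_sub_sub, map_sub _ (z - p), map_smul, perp_self he, smul_zero, sub_zero]
      _ ≤ dist z (p + t • e) := (norm_perp_le he _).trans_eq (dist_eq_norm _ _).symm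

theorem line_smul {c : ℝ} (hc : c ≠ 0) (p v : E) : line p (c • v) = line p v := by
  ext z
  constructor
  · rintro ⟨t, rfl⟩
    exact ⟨t * c, by simp only [mul_smul]⟩
  · rintro ⟨t, rfl⟩
    exact ⟨t * c⁻¹, by simp only [mul_smul, inv_smul_smul₀ hc]⟩

theorem setOf_infDist_line_le {v : E} (hv : v ≠ 0) (p : E) (r : ℝ) :
    {z | infDist z (line p v) ≤ r} = tube p (‖v‖⁻¹ • v) r := by
  have hu : ‖‖v‖⁻¹ • v‖ = 1 := norm_smul_inv_norm hv
  ext z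
  show infDist z (line p v) ≤ r ↔ _
  rw [← line_smul (inv_ne_zero (norm_ne_zero_iff.2 hv)), infDist_line hu]
  rfl

variable {p₁ p₂ x y z w : E} {r : ℝ}

theorem norm_perp_perp_sub_le (he : ‖e‖ = 1) (hz : z ∈ tube p₂ e₂ r) (hw : w ∈ tube p₂ e₂ r) :
    ‖perp e (perp e₂ (z - p₂) - perp e₂ (w - p₂))‖ ≤ 2 * r :=
  calc _ ≤ ‖perp e₂ (z - p₂) - perp e₂ (w - p₂)‖ := norm_perp_le he _
    _ ≤ ‖perp e₂ (z - p₂)‖ + ‖perp e₂ (w - p₂)‖ := norm_sub_le _ _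
    _ ≤ 2 * r := by
      linarith [show ‖perp e₂ (z - p₂)‖ ≤ r from hz, show ‖perp e₂ (w - p₂)‖ ≤ r from hw]

theorem abs_inner_mul_norm_perp_le (he : ‖e‖ = 1) (hz : z ∈ tube p₂ e₂ r)
    (hw : w ∈ tube p₂ e₂ r) (b : E) :
    |⟪e₂, z - w⟫| * ‖perp e e₂‖ ≤ ‖perp e (z - b)‖ + ‖perp e (w - b)‖ + 2 * r := by
  have h : ⟪e₂, z - w⟫ • perp e e₂ = perp e (z - b) - perp e (w - b)
      - perp e (perp e₂ (z - p₂) - perp e₂ (w - p₂)) := by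
    rw [perp_sub_eq e e₂ b p₂ z w]; abel
  calc |⟪e₂, z - w⟫| * ‖perp e e₂‖ = ‖⟪e₂, z - w⟫ • perp e e₂‖ := by
        rw [norm_smul, Real.norm_eq_abs]
    _ ≤ _ := by
      rw [h]
      grw [norm_sub_le, norm_sub_le, norm_perp_perp_sub_le he hz hw]

theorem norm_perp_le_of_mem_tube (he : ‖e‖ = 1) (hz : z ∈ tube p₂ e₂ r)
    (hw : w ∈ tube p₂ e₂ r) (b : E) :
    ‖perp e (z - b)‖ ≤ ‖perp e (w - b)‖ + |⟪e₂, z - w⟫| * ‖perp e e₂‖ + 2 * r := by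
  rw [perp_sub_eq e e₂ b p₂ z w]
  grw [norm_add_le, norm_add_le, norm_smul, Real.norm_eq_abs, norm_perp_perp_sub_le he hz hw]

theorem norm_sub_le_of_mem_tube (he : ‖e‖ = 1) (hx : x ∈ tube p e r) (hy : y ∈ tube p e r) :
    ‖y - x‖ ≤ |⟪e, y - x⟫| + 2 * r := by
  have hsub : perp e (y - x) = perp e (y - p) - perp e (x - p) := by
    rw [← map_sub, sub_sub_sub_cancel_right]
  grw [norm_le_abs_inner_add_norm_perp he (y - x), hsub, norm_sub_le]
  linarith [show ‖perp e (y - p)‖ ≤ r from hy, show ‖perp e (x - p)‖ ≤ r from hx]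

theorem mem_tube_of_small_angle (he₁ : ‖e₁‖ = 1) (he₂ : ‖e₂‖ = 1) (hz : z ∈ tube p₂ e₂ 1)
    (hw₁ : w ∈ tube p₁ e₁ 1) (hw₂ : w ∈ tube p₂ e₂ 1) (hzw : ‖z - w‖ * ‖perp e₁ e₂‖ ≤ 1) :
    z ∈ tube p₁ e₁ 4 := by
  have hzw' : |⟪e₂, z - w⟫| * ‖perp e₁ e₂‖ ≤ 1 :=
    (mul_le_mul_of_nonneg_right (abs_real_inner_le_norm _ _) (norm_nonneg _)).trans
      (by rwa [he₂, one_mul])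
  have h := norm_perp_le_of_mem_tube he₁ hz hw₂ p₁
  have hw : ‖perp e₁ (w - p₁)‖ ≤ 1 := hw₁
  show ‖perp e₁ (z - p₁)‖ ≤ 4
  linarith

theorem sub_two_mul_norm_perp_le (he : ‖e‖ = 1) (he₂ : ‖e₂‖ = 1) (hx : x ∈ tube p₂ e₂ 1)
    (hy : y ∈ tube p₂ e₂ 1) (hyx : perp e (y - x) = 0) :
    (‖y - x‖ - 2) * ‖perp e e₂‖ ≤ 2 := by
  have h := abs_inner_mul_norm_perp_le he hy hx x
  rw [hyx, sub_self, map_zero, norm_zero] at h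
  have hchord : ‖y - x‖ - 2 ≤ |⟪e₂, y - x⟫| := by
    linarith [norm_sub_le_of_mem_tube he₂ hx hy]
  nlinarith [norm_nonneg (perp e e₂)]

theorem mem_tube_of_large_angle {a : ℝ} (ha : 650 ≤ a) (he₁ : ‖e₁‖ = 1) (he₂ : ‖e₂‖ = 1)
    (he : ‖e‖ = 1) (hangle : 100 ≤ a * ‖perp e₁ e₂‖)
    (hx₁ : x ∈ tube p₁ e₁ 1) (hx₂ : x ∈ tube p₂ e₂ 1) (hy : y ∈ tube p₂ e₂ 1)
    (hxy : 2 * a / 25 ≤ ‖y - x‖) (hyx : perp e (y - x) = 0)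
    (hz : z ∈ tube p₂ e₂ 1) (hw₁ : w ∈ tube p₁ e₁ 1) (hw₂ : w ∈ tube p₂ e₂ 1)
    (hzw : ‖z - w‖ ≤ a / 100) :
    z ∈ tube x e 4 := by
  have hxw : |⟪e₂, x - w⟫| ≤ a / 25 := by
    have h := abs_inner_mul_norm_perp_le he₁ hx₂ hw₂ p₁
    have : ‖perp e₁ (x - p₁)‖ ≤ 1 := hx₁
    have : ‖perp e₁ (w - p₁)‖ ≤ 1 := hw₁
    nlinarith [abs_nonneg ⟪e₂, x - w⟫]
  have hzx : |⟪e₂, z - x⟫| ≤ a / 20 := by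
    have hzw' : |⟪e₂, z - w⟫| ≤ a / 100 :=
      (abs_real_inner_le_norm _ _).trans (by rwa [he₂, one_mul])
    rw [← sub_sub_sub_cancel_right z x w, inner_sub_right]
    linarith [abs_sub ⟪e₂, z - w⟫ ⟪e₂, x - w⟫]
  have hslope : a * ‖perp e e₂‖ ≤ 26 := by
    nlinarith [sub_two_mul_norm_perp_le he he₂ hx₂ hy hyx, norm_nonneg (perp e e₂)]
  have h := norm_perp_le_of_mem_tube he hz hx₂ x
  rw [sub_self, map_zero, norm_zero] at h
  show ‖perp e (z - x)‖ ≤ 4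
  nlinarith [abs_nonneg ⟪e₂, z - x⟫, norm_nonneg (perp e e₂)]

theorem exists_line_of_far_points_mem_inter {a : ℝ} (ha : 650 ≤ a)
    (he₁ : ‖e₁‖ = 1) (he₂ : ‖e₂‖ = 1)
    (hx₁ : x ∈ tube p₁ e₁ 1) (hx₂ : x ∈ tube p₂ e₂ 1)
    (hy₁ : y ∈ tube p₁ e₁ 1) (hy₂ : y ∈ tube p₂ e₂ 1) (hxy : 2 * a / 25 ≤ dist x y) :
    ∃ b e : E, ‖e‖ = 1 ∧ ∀ z ∈ tube p₁ e₁ 1 ∪ tube p₂ e₂ 1,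
      ∀ w ∈ tube p₁ e₁ 1 ∩ tube p₂ e₂ 1, dist z w ≤ a / 100 → z ∈ tube b e 4 := by
  rw [dist_comm, dist_eq_norm] at hxy
  by_cases hangle : 100 ≤ a * ‖perp e₁ e₂‖
  · have hyx : y - x ≠ 0 := norm_pos_iff.1 (by linarith)
    set e := ‖y - x‖⁻¹ • (y - x) with he_def
    have he : ‖e‖ = 1 := norm_smul_inv_norm hyx
    have hyx' : perp e (y - x) = 0 := by
      rw [← smul_inv_smul₀ (norm_ne_zero_iff.2 hyx) (y - x), ← he_def, map_smul, perp_self he,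
        smul_zero]
    refine ⟨x, e, he, ?_⟩
    rintro z hz w ⟨hw₁, hw₂⟩ hzw
    rw [dist_eq_norm] at hzw
    rcases hz with hz | hz
    · rw [norm_perp_comm he₁ he₂] at hangle
      exact mem_tube_of_large_angle ha he₂ he₁ he hangle hx₂ hx₁ hy₁ hxy hyx' hz hw₂ hw₁ hzw
    · exact mem_tube_of_large_angle ha he₁ he₂ he hangle hx₁ hx₂ hy₂ hxy hyx' hz hw₁ hw₂ hzw
  · refine ⟨p₁, e₁, he₁, ?_⟩
    rintro z hz w ⟨hw₁, hw₂⟩ hzw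
    rw [dist_eq_norm] at hzw
    rcases hz with hz | hz
    · exact (show ‖perp e₁ (z - p₁)‖ ≤ 1 from hz).trans (by norm_num)
    · refine mem_tube_of_small_angle he₁ he₂ hz hw₁ hw₂ ?_
      nlinarith [norm_nonneg (perp e₁ e₂)]

end Tubes

theorem image_Icc_subset_or_subset {X : Type*} [TopologicalSpace X] {η : ℝ → X}
    {C₁ C₂ : Set X} (h₁ : IsClosed C₁) (h₂ : IsClosed C₂) {u t : ℝ} (hut : u < t)
    (hη : ContinuousOn η (Icc u t)) (hcover : η '' Icc u t ⊆ C₁ ∪ C₂)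
    (hgap : ∀ s ∈ Ioo u t, η s ∉ C₁ ∩ C₂) :
    η '' Icc u t ⊆ C₁ ∨ η '' Icc u t ⊆ C₂ := by
  have hpre : IsPreconnected (η '' Ioo u t) :=
    isPreconnected_Ioo.image η (hη.mono Ioo_subset_Icc_self)
  have hcl : η '' Icc u t ⊆ closure (η '' Ioo u t) := by
    rw [← closure_Ioo hut.ne] at hη ⊢
    exact hη.image_closure
  have hdisj : η '' Ioo u t ∩ (C₁ ∩ C₂) = ∅ :=
    eq_empty_iff_forall_notMem.2 fun _ ⟨⟨s, hs, hsz⟩, hC⟩ => hgap s hs (hsz ▸ hC)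
  exact (isPreconnected_iff_subset_of_disjoint_closed.1 hpre C₁ C₂ h₁ h₂
    ((image_mono Ioo_subset_Icc_self).trans hcover) hdisj).imp
    (fun h => hcl.trans (closure_minimal h h₁)) (fun h => hcl.trans (closure_minimal h h₂))

theorem exists_mem_le_forall_Ioo_notMem {K : Set ℝ} (hK : IsClosed K) {k t : ℝ} (hk : k ∈ K)
    (hkt : k ≤ t) : ∃ u ∈ K, u ≤ t ∧ ∀ s ∈ Ioo u t, s ∉ K := by
  have hbdd : BddAbove (K ∩ Iic t) := ⟨t, fun _ h => h.2⟩
  obtain ⟨huK, hut⟩ := (hK.inter isClosed_Iic).csSup_mem ⟨k, hk, hkt⟩ hbdd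
  exact ⟨_, huK, hut, fun s hs hsK => (le_csSup hbdd ⟨hsK, hs.2.le⟩).not_gt hs.1⟩

theorem exists_far_pair_of_short_gaps {X : Type*} [PseudoMetricSpace X] {η : ℝ → X}
    {K : Set ℝ} {δ : ℝ} (hK : IsClosed K) (hK01 : K ⊆ Icc 0 1)
    (hgap : ∀ u ∈ Icc (0 : ℝ) 1, ∀ t ∈ Icc (0 : ℝ) 1, u ≤ t → (∀ s ∈ Ioo u t, s ∉ K) →
      dist (η u) (η t) < δ)
    (hδ : δ ≤ dist (η 0) (η 1)) :
    ∃ α ∈ K, ∃ β ∈ K, α ≤ β ∧ dist (η 0) (η 1) ≤ dist (η α) (η β) + 2 * δ ∧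
      ∀ t ∈ Icc α β, ∃ u ∈ K, dist (η t) (η u) < δ := by
  have h0 : (0 : ℝ) ∈ Icc (0 : ℝ) 1 := left_mem_Icc.2 zero_le_one
  have h1 : (1 : ℝ) ∈ Icc (0 : ℝ) 1 := right_mem_Icc.2 zero_le_one
  obtain ⟨k, hk⟩ : K.Nonempty := by
    by_contra hK0
    exact (hgap 0 h0 1 h1 zero_le_one fun s _ hs => hK0 ⟨s, hs⟩).not_ge hδ
  have hbdd : BddBelow K := ⟨0, fun _ h => (hK01 h).1⟩
  have hα : sInf K ∈ K := hK.csInf_mem ⟨k, hk⟩ hbdd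
  obtain ⟨β, hβ, hβ1, hβgap⟩ := exists_mem_le_forall_Ioo_notMem hK hα (hK01 hα).2
  refine ⟨sInf K, hα, β, hβ, csInf_le hbdd hβ, ?_, fun t ht => ?_⟩
  · have h0α := hgap 0 h0 _ (hK01 hα) (hK01 hα).1 fun s hs => notMem_of_lt_csInf hs.2 hbdd
    have hβ1 := hgap β (hK01 hβ) 1 h1 hβ1 hβgap
    linarith [dist_triangle4 (η 0) (η (sInf K)) (η β) (η 1)]
  · obtain ⟨u, hu, hut, hugap⟩ := exists_mem_le_forall_Ioo_notMem hK hα ht.1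
    have ht01 : t ∈ Icc (0 : ℝ) 1 := ⟨(hK01 hα).1.trans ht.1, ht.2.trans (hK01 hβ).2⟩
    exact ⟨u, hu, dist_comm (η t) (η u) ▸ hgap u (hK01 hu) t ht01 hut hugap⟩

theorem exists_arc_subset_or_near_inter {X : Type*} [PseudoMetricSpace X] {η : ℝ → X}
    {C₁ C₂ : Set X} {δ : ℝ} (h₁ : IsClosed C₁) (h₂ : IsClosed C₂)
    (hη : ContinuousOn η (Icc 0 1)) (hrange : ∀ t ∈ Icc (0 : ℝ) 1, η t ∈ C₁ ∪ C₂)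
    (hδ₀ : 0 < δ) (hδ : δ ≤ dist (η 0) (η 1)) :
    (∃ t₁ ∈ Icc (0 : ℝ) 1, ∃ t₂ ∈ Icc (0 : ℝ) 1, t₁ < t₂ ∧ δ ≤ dist (η t₁) (η t₂) ∧
      (η '' Icc t₁ t₂ ⊆ C₁ ∨ η '' Icc t₁ t₂ ⊆ C₂)) ∨
    (∃ α ∈ Icc (0 : ℝ) 1, ∃ β ∈ Icc (0 : ℝ) 1, α ≤ β ∧ η α ∈ C₁ ∩ C₂ ∧ η β ∈ C₁ ∩ C₂ ∧
      dist (η 0) (η 1) ≤ dist (η α) (η β) + 2 * δ ∧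
      ∀ t ∈ Icc α β, ∃ u, η u ∈ C₁ ∩ C₂ ∧ dist (η t) (η u) < δ) := by
  refine or_iff_not_imp_left.2 fun harc => ?_
  set K := Icc (0 : ℝ) 1 ∩ η ⁻¹' (C₁ ∩ C₂)
  have hgap : ∀ u ∈ Icc (0 : ℝ) 1, ∀ t ∈ Icc (0 : ℝ) 1, u ≤ t → (∀ s ∈ Ioo u t, s ∉ K) →
      dist (η u) (η t) < δ := by
    intro u hu t ht hut hugap
    rcases hut.eq_or_lt with rfl | hut
    · rwa [dist_self]
    by_contra! hd
    have hsub : Icc u t ⊆ Icc 0 1 := Icc_subset_Icc hu.1 ht.2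
    exact harc ⟨u, hu, t, ht, hut, hd, image_Icc_subset_or_subset h₁ h₂ hut (hη.mono hsub)
      (image_subset_iff.2 fun s hs => hrange s (hsub hs))
      fun s hs hsC => hugap s hs ⟨hsub (Ioo_subset_Icc_self hs), hsC⟩⟩
  obtain ⟨α, hα, β, hβ, hαβ, hfar, hnear⟩ :=
    exists_far_pair_of_short_gaps (hη.preimage_isClosed_of_isClosed isClosed_Icc (h₁.inter h₂))
      inter_subset_left hgap hδ
  exact ⟨α, hα.1, β, hβ.1, hαβ, hα.2, hβ.2, hfar, fun t ht =>
    let ⟨u, hu, htu⟩ := hnear t ht; ⟨u, hu.2, htu⟩⟩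

theorem stmt_9 (a : ℝ) (ha : a ≥ 288 ^ 6)
    (p1 v1 p2 v2 : EuclideanSpace ℝ (Fin 3))
    (hv1 : v1 ≠ 0) (hv2 : v2 ≠ 0)
    (C1 C2 : Set (EuclideanSpace ℝ (Fin 3)))
    (hC1 : C1 = {z | Metric.infDist z (Set.range fun t : ℝ => p1 + t • v1) ≤ 1})
    (hC2 : C2 = {z | Metric.infDist z (Set.range fun t : ℝ => p2 + t • v2) ≤ 1})
    (η : ℝ → EuclideanSpace ℝ (Fin 3))
    (hcont : ContinuousOn η (Set.Icc 0 1))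
    (hrange : ∀ t ∈ Set.Icc (0 : ℝ) 1, η t ∈ C1 ∪ C2)
    (hdist : dist (η 0) (η 1) ≥ a / 10) :
    ∃ (p v : EuclideanSpace ℝ (Fin 3)), v ≠ 0 ∧
      ∃ t1 t2 : ℝ, t1 ∈ Set.Icc (0 : ℝ) 1 ∧ t2 ∈ Set.Icc (0 : ℝ) 1 ∧ t1 < t2 ∧
        dist (η t1) (η t2) ≥ a / 100 ∧
        ∀ t ∈ Set.Icc t1 t2,
          Metric.infDist (η t) (Set.range fun s : ℝ => p + s • v) ≤ 4 := by
  have hC1c : IsClosed C1 := hC1 ▸ isClosed_le (continuous_infDist_pt _) continuous_const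
  have hC2c : IsClosed C2 := hC2 ▸ isClosed_le (continuous_infDist_pt _) continuous_const
  rcases exists_arc_subset_or_near_inter (δ := a / 100) hC1c hC2c hcont hrange (by linarith)
    (by linarith) with
    ⟨t1, ht1, t2, ht2, h12, hd, hC | hC⟩ | ⟨α, hα, β, hβ, hαβ, hαC, hβC, hfar, hnear⟩
  · refine ⟨p1, v1, hv1, t1, t2, ht1, ht2, h12, hd, fun t ht => ?_⟩
    have h : η t ∈ C1 := hC (mem_image_of_mem η ht)
    rw [hC1] at h
    exact h.out.trans (by norm_num)
  · refine ⟨p2, v2, hv2, t1, t2, ht1, ht2, h12, hd, fun t ht => ?_⟩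
    have h : η t ∈ C2 := hC (mem_image_of_mem η ht)
    rw [hC2] at h
    exact h.out.trans (by norm_num)
  rw [hC1.trans (setOf_infDist_line_le hv1 p1 1), hC2.trans (setOf_infDist_line_le hv2 p2 1)]
    at hrange hαC hβC hnear
  obtain ⟨b, e, he, hline⟩ := exists_line_of_far_points_mem_inter (le_trans (by norm_num) ha)
    (norm_smul_inv_norm hv1) (norm_smul_inv_norm hv2) hαC.1 hαC.2 hβC.1 hβC.2 (by linarith)
  have hαβ' : α < β := hαβ.lt_of_ne <| by
    rintro rfl
    rw [dist_self] at hfar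
    linarith
  refine ⟨b, e, ne_zero_of_norm_ne_zero (he ▸ one_ne_zero), α, β, hα, hβ, hαβ', by linarith,
    fun t ht => ?_⟩
  obtain ⟨u, hu, htu⟩ := hnear t ht
  exact (infDist_line he b (η t)).trans_le
    (hline _ (hrange t (Icc_subset_Icc hα.1 hβ.2 ht)) _ hu htu.le)
end

section
/- Let (p_n)_{n≥0} and (q_n)_{n≥0} be sequences of nonnegative reals, let a_0 ≥ 288^6 ∨ (8·max(C1,C2))^168 with constants C1, C2 > 0, γ = 7/6, a_n = a_0^(γ^n), and suppose for all n ≥ 1: p_n ≤ C1·(a_{n-1}^(γ-1))²·[p_{n-1}² + (a_{n-1}^(1-γ))⁶ + (a_{n-1}^(1-γ))²·q_{n-1}²] and q_n ≤ C2·{(a_{n-1}^(γ-1))²·[p_{n-1}² + (a_{n-1}^(1-γ))⁶ + (a_{n-1}^(1-γ))²·q_{n-1}²] + a_{n-1}^(γ-1)·[p_{n-1}·q_{n-1} + (a_{n-1}^(1-γ))²·q_{n-1} + (a_{n-1}^(1-γ))⁶] + [q_{n-1}² + (a_{n-1}^(1-γ))²]}. If p_0 ≤ a_0^((5/2)(1-γ))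 and q_0 ≤ a_0^((3/2)(1-γ)), then for all n ≥ 0: p_n ≤ a_n^((5/2)(1-γ)) and q_n ≤ a_n^((3/2)(1-γ)); in particular p_n → 0 as n → ∞. -/
/-!
Rescale by `c n = a_n ^ (-1/72)`, which lies in `(0, 1]`. Then `a_n ^ (1 - γ) = c n ^ 12`, the
claimed bounds read `p n ≤ c n ^ 30` and `q n ≤ c n ^ 18`, and `a_{n+1} = a_n ^ (7/6)` becomes
`c (n + 1) ^ 6 = c n ^ 7`, so that `c (n + 1) ^ 30 = c n ^ 35` and `c (n + 1) ^ 18 = c n ^ 21`.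
Feeding the induction hypothesis into the recursions, every term on the right is at most a power
of `c n` that beats the target by at least a factor `c n`, and `8 max C1 C2 · c n ≤ 1` absorbs the
constants because `a_n ≥ a_0 ≥ (8 max C1 C2) ^ 72`.
-/

open Filter

lemma pow_le_of_pow_le_of_one_le {K a : ℝ} {m n : ℕ} (hK : 0 ≤ K) (hnm : n ≤ m) (ha : 1 ≤ a)
    (hKa : K ^ m ≤ a) : K ^ n ≤ a := by
  rcases le_total K 1 with h | h
  · exact (pow_le_one₀ hK h).trans ha
  · exact (pow_le_pow_right₀ h hnm).trans hKa

lemma mul_rpow_neg_inv_le_one {K b : ℝ} {n : ℕ} (hn : n ≠ 0) (hK : 0 ≤ K) (hb : K ^ n ≤ b) :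
    K * b ^ (-(n : ℝ)⁻¹) ≤ 1 := by
  rcases hK.eq_or_lt with rfl | hK
  · simp
  have hb0 : 0 < b := (pow_pos hK n).trans_le hb
  calc K * b ^ (-(n : ℝ)⁻¹) = (K ^ n) ^ (n : ℝ)⁻¹ * b ^ (-(n : ℝ)⁻¹) := by
        rw [Real.pow_rpow_inv_natCast hK.le hn]
    _ ≤ b ^ (n : ℝ)⁻¹ * b ^ (-(n : ℝ)⁻¹) := by gcongr
    _ = 1 := by rw [← Real.rpow_add hb0, add_neg_cancel, Real.rpow_zero]

noncomputable def scale (b : ℝ) : ℝ := b ^ (-(72 : ℝ)⁻¹)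

lemma scale_pos {b : ℝ} (hb : 0 < b) : 0 < scale b := Real.rpow_pos_of_pos hb _

lemma scale_le_one {b : ℝ} (hb : 1 ≤ b) : scale b ≤ 1 :=
  Real.rpow_le_one_of_one_le_of_nonpos hb (by norm_num)

lemma mul_scale_le_one {K b : ℝ} (hK : 0 ≤ K) (hb : K ^ 72 ≤ b) : K * scale b ≤ 1 := by
  simpa [scale] using mul_rpow_neg_inv_le_one (n := 72) (by norm_num) hK hb

lemma rpow_eq_scale_pow {b x : ℝ} (hb : 0 ≤ b) (k : ℕ) (hx : x = -(k : ℝ) / 72) :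
    b ^ x = scale b ^ k := by
  rw [scale, ← Real.rpow_mul_natCast hb, hx]; ring_nf

lemma rpow_sub_one_eq_inv_scale_pow {b : ℝ} (hb : 0 ≤ b) :
    b ^ (7 / 6 - 1 : ℝ) = (scale b ^ 12)⁻¹ := by
  rw [← rpow_eq_scale_pow hb 12 rfl, ← Real.rpow_neg hb]; norm_num

lemma scale_rpow_pow {b : ℝ} (hb : 0 ≤ b) : scale (b ^ (7 / 6 : ℝ)) ^ 6 = scale b ^ 7 := by
  rw [← rpow_eq_scale_pow (Real.rpow_nonneg hb _) 6 rfl, ← rpow_eq_scale_pow hb 7 rfl,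
    ← Real.rpow_mul hb]
  norm_num

lemma tendsto_zero_of_le_rpow_pow {a γ s : ℝ} {p : ℕ → ℝ} (ha : 1 < a) (hγ : 1 < γ) (hs : s < 0)
    (hp0 : ∀ n, 0 ≤ p n) (hp : ∀ n, p n ≤ (a ^ γ ^ n) ^ s) : Tendsto p atTop (nhds 0) := by
  have hpow : Tendsto (fun n : ℕ => a ^ γ ^ n) atTop atTop :=
    (tendsto_rpow_atTop_of_base_gt_one a ha).comp (tendsto_pow_atTop_atTop_of_one_lt hγ)
  have hlim := (tendsto_rpow_neg_atTop (neg_pos.2 hs)).comp hpow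
  rw [neg_neg] at hlim
  exact squeeze_zero hp0 hp hlim

lemma quadratic_terms_le {c p q : ℝ} (hc0 : 0 ≤ c) (hc1 : c ≤ 1) (hp : 0 ≤ p)
    (hq : 0 ≤ q) (hpc : p ≤ c ^ 30) (hqc : q ≤ c ^ 18) :
    p ^ 2 + (c ^ 12) ^ 6 + (c ^ 12) ^ 2 * q ^ 2 ≤ 3 * c ^ 60 := by
  have hp2 : p ^ 2 ≤ c ^ 60 := by
    calc p ^ 2 ≤ (c ^ 30) ^ 2 := by gcongr
      _ = c ^ 60 := by ring
  have hc72 : (c ^ 12) ^ 6 ≤ c ^ 60 := by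
    rw [← pow_mul]; exact pow_le_pow_of_le_one hc0 hc1 (by norm_num)
  have hq2 : (c ^ 12) ^ 2 * q ^ 2 ≤ c ^ 60 := by
    calc (c ^ 12) ^ 2 * q ^ 2 ≤ (c ^ 12) ^ 2 * (c ^ 18) ^ 2 := by gcongr
      _ = c ^ 60 := by ring
  linarith

lemma p_step_le {C c p q : ℝ} (hc0 : 0 < c) (hc1 : c ≤ 1) (hC : 0 ≤ C) (hCc : 8 * C * c ≤ 1)
    (hp : 0 ≤ p) (hq : 0 ≤ q) (hpc : p ≤ c ^ 30) (hqc : q ≤ c ^ 18) :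
    C * ((c ^ 12)⁻¹) ^ 2 * (p ^ 2 + (c ^ 12) ^ 6 + (c ^ 12) ^ 2 * q ^ 2) ≤ c ^ 35 := by
  calc C * ((c ^ 12)⁻¹) ^ 2 * (p ^ 2 + (c ^ 12) ^ 6 + (c ^ 12) ^ 2 * q ^ 2)
      ≤ C * ((c ^ 12)⁻¹) ^ 2 * (3 * c ^ 60) := by
        gcongr; exact quadratic_terms_le hc0.le hc1 hp hq hpc hqc
    _ = (3 * C * c) * c ^ 35 := by field_simp
    _ ≤ c ^ 35 := mul_le_of_le_one_left (by positivity) (by nlinarith)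

lemma q_step_le {C c p q : ℝ} (hc0 : 0 < c) (hc1 : c ≤ 1) (hC : 0 ≤ C) (hCc : 8 * C * c ≤ 1)
    (hp : 0 ≤ p) (hq : 0 ≤ q) (hpc : p ≤ c ^ 30) (hqc : q ≤ c ^ 18) :
    C * (((c ^ 12)⁻¹) ^ 2 * (p ^ 2 + (c ^ 12) ^ 6 + (c ^ 12) ^ 2 * q ^ 2) +
      (c ^ 12)⁻¹ * (p * q + (c ^ 12) ^ 2 * q + (c ^ 12) ^ 6) +
      (q ^ 2 + (c ^ 12) ^ 2)) ≤ c ^ 21 := by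
  have hmono : ∀ {m n : ℕ}, m ≤ n → c ^ n ≤ c ^ m := pow_le_pow_of_le_one hc0.le hc1
  have hlin : p * q + (c ^ 12) ^ 2 * q + (c ^ 12) ^ 6 ≤ 3 * c ^ 42 := by
    have hpq : p * q ≤ c ^ 42 :=
      calc p * q ≤ c ^ 30 * c ^ 18 := by gcongr
        _ = c ^ 48 := by ring
        _ ≤ c ^ 42 := hmono (by norm_num)
    have hq' : (c ^ 12) ^ 2 * q ≤ c ^ 42 :=
      calc (c ^ 12) ^ 2 * q ≤ (c ^ 12) ^ 2 * c ^ 18 := by gcongr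
        _ = c ^ 42 := by ring
    have hc72 : (c ^ 12) ^ 6 ≤ c ^ 42 := by rw [← pow_mul]; exact hmono (by norm_num)
    linarith
  have hconst : q ^ 2 + (c ^ 12) ^ 2 ≤ 2 * c ^ 24 := by
    have hq2 : q ^ 2 ≤ c ^ 24 :=
      calc q ^ 2 ≤ (c ^ 18) ^ 2 := by gcongr
        _ = c ^ 36 := by ring
        _ ≤ c ^ 24 := hmono (by norm_num)
    linarith [show (c ^ 12) ^ 2 = c ^ 24 by ring]
  calc C * (((c ^ 12)⁻¹) ^ 2 * (p ^ 2 + (c ^ 12) ^ 6 + (c ^ 12) ^ 2 * q ^ 2) +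
        (c ^ 12)⁻¹ * (p * q + (c ^ 12) ^ 2 * q + (c ^ 12) ^ 6) + (q ^ 2 + (c ^ 12) ^ 2))
      ≤ C * (((c ^ 12)⁻¹) ^ 2 * (3 * c ^ 60) + (c ^ 12)⁻¹ * (3 * c ^ 42) + 2 * c ^ 24) := by
        gcongr; exact quadratic_terms_le hc0.le hc1 hp hq hpc hqc
    _ = C * (3 * c ^ 36 + 3 * c ^ 30 + 2 * c ^ 24) := by field_simp
    _ ≤ C * (8 * c ^ 24) := by
        gcongr
        linarith [hmono (show 24 ≤ 36 by norm_num), hmono (show 24 ≤ 30 by norm_num)]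
    _ = (8 * C * c) * c ^ 23 := by ring
    _ ≤ c ^ 23 := mul_le_of_le_one_left (by positivity) hCc
    _ ≤ c ^ 21 := hmono (by norm_num)

theorem bounds_of_scaled_recursion {C1 C2 : ℝ} {c p q : ℕ → ℝ} (hC1 : 0 ≤ C1) (hC2 : 0 ≤ C2)
    (hc0 : ∀ n, 0 < c n) (hc1 : ∀ n, c n ≤ 1)
    (hC1c : ∀ n, 8 * C1 * c n ≤ 1) (hC2c : ∀ n, 8 * C2 * c n ≤ 1)
    (hc_succ : ∀ n, c (n + 1) ^ 6 = c n ^ 7) (hp : ∀ n, 0 ≤ p n) (hq : ∀ n, 0 ≤ q n)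
    (hprec : ∀ n, p (n + 1) ≤ C1 * ((c n ^ 12)⁻¹) ^ 2 *
      (p n ^ 2 + (c n ^ 12) ^ 6 + (c n ^ 12) ^ 2 * q n ^ 2))
    (hqrec : ∀ n, q (n + 1) ≤ C2 * (((c n ^ 12)⁻¹) ^ 2 *
      (p n ^ 2 + (c n ^ 12) ^ 6 + (c n ^ 12) ^ 2 * q n ^ 2) +
      (c n ^ 12)⁻¹ * (p n * q n + (c n ^ 12) ^ 2 * q n + (c n ^ 12) ^ 6) +
      (q n ^ 2 + (c n ^ 12) ^ 2)))
    (hp_zero : p 0 ≤ c 0 ^ 30) (hq_zero : q 0 ≤ c 0 ^ 18) (n : ℕ) :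
    p n ≤ c n ^ 30 ∧ q n ≤ c n ^ 18 := by
  induction n with
  | zero => exact ⟨hp_zero, hq_zero⟩
  | succ n ih =>
    have h30 : c (n + 1) ^ 30 = c n ^ 35 := by
      rw [show c (n + 1) ^ 30 = (c (n + 1) ^ 6) ^ 5 by ring, hc_succ]; ring
    have h18 : c (n + 1) ^ 18 = c n ^ 21 := by
      rw [show c (n + 1) ^ 18 = (c (n + 1) ^ 6) ^ 3 by ring, hc_succ]; ring
    rw [h30, h18]
    exact ⟨(hprec n).trans (p_step_le (hc0 n) (hc1 n) hC1 (hC1c n) (hp n) (hq n) ih.1 ih.2),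
      (hqrec n).trans (q_step_le (hc0 n) (hc1 n) hC2 (hC2c n) (hp n) (hq n) ih.1 ih.2)⟩

theorem stmt_19 (C1 C2 : ℝ) (hC1 : 0 < C1) (hC2 : 0 < C2)
    (γ : ℝ) (hγ : γ = 7 / 6)
    (a : ℝ) (ha : a ≥ max (288 ^ 6) ((8 * max C1 C2) ^ 168))
    (aseq : ℕ → ℝ) (haseq : ∀ n, aseq n = a ^ (γ ^ n))
    (p q : ℕ → ℝ) (hp0 : ∀ n, 0 ≤ p n) (hq0 : ∀ n, 0 ≤ q n)
    (hprec : ∀ n : ℕ, 1 ≤ n →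
      p n ≤ C1 * (aseq (n - 1) ^ (γ - 1)) ^ 2 *
        (p (n - 1) ^ 2 + (aseq (n - 1) ^ (1 - γ)) ^ 6 +
          (aseq (n - 1) ^ (1 - γ)) ^ 2 * q (n - 1) ^ 2))
    (hqrec : ∀ n : ℕ, 1 ≤ n →
      q n ≤ C2 * ((aseq (n - 1) ^ (γ - 1)) ^ 2 *
          (p (n - 1) ^ 2 + (aseq (n - 1) ^ (1 - γ)) ^ 6 +
            (aseq (n - 1) ^ (1 - γ)) ^ 2 * q (n - 1) ^ 2) +
        aseq (n - 1) ^ (γ - 1) *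
          (p (n - 1) * q (n - 1) + (aseq (n - 1) ^ (1 - γ)) ^ 2 * q (n - 1) +
            (aseq (n - 1) ^ (1 - γ)) ^ 6) +
        (q (n - 1) ^ 2 + (aseq (n - 1) ^ (1 - γ)) ^ 2)))
    (hp0' : p 0 ≤ aseq 0 ^ ((5 / 2) * (1 - γ)))
    (hq0' : q 0 ≤ aseq 0 ^ ((3 / 2) * (1 - γ))) :
    (∀ n : ℕ, p n ≤ aseq n ^ ((5 / 2) * (1 - γ)) ∧
        q n ≤ aseq n ^ ((3 / 2) * (1 - γ))) ∧
      Filter.Tendsto p Filter.atTop (nhds 0) := by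
  subst hγ
  have ha1 : 1 < a := lt_of_lt_of_le (by norm_num) ((le_max_left _ _).trans ha)
  have ha_le : ∀ n, a ≤ aseq n := fun n =>
    haseq n ▸ Real.self_le_rpow_of_one_le ha1.le (one_le_pow₀ (by norm_num))
  have haseq_nonneg : ∀ n, 0 ≤ aseq n := fun n => by linarith [ha_le n]
  have haseq_succ : ∀ n, aseq (n + 1) = aseq n ^ (7 / 6 : ℝ) := fun n => by
    rw [haseq, haseq, pow_succ, Real.rpow_mul (by linarith)]
  set K := 8 * max C1 C2
  have hK : 0 ≤ K := by linarith [hC1.le.trans (le_max_left C1 C2)]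
  have hKa : K ^ 72 ≤ a :=
    pow_le_of_pow_le_of_one_le hK (by norm_num) ha1.le ((le_max_right _ _).trans ha)
  have h30 : ∀ n, aseq n ^ (5 / 2 * (1 - 7 / 6 : ℝ)) = scale (aseq n) ^ 30 := fun n =>
    rpow_eq_scale_pow (haseq_nonneg n) 30 (by norm_num)
  have h18 : ∀ n, aseq n ^ (3 / 2 * (1 - 7 / 6 : ℝ)) = scale (aseq n) ^ 18 := fun n =>
    rpow_eq_scale_pow (haseq_nonneg n) 18 (by norm_num)
  have h12 : ∀ n, aseq n ^ (1 - 7 / 6 : ℝ) = scale (aseq n) ^ 12 := fun n =>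
    rpow_eq_scale_pow (haseq_nonneg n) 12 (by norm_num)
  have hinv : ∀ n, aseq n ^ (7 / 6 - 1 : ℝ) = (scale (aseq n) ^ 12)⁻¹ := fun n =>
    rpow_sub_one_eq_inv_scale_pow (haseq_nonneg n)
  have hc0 : ∀ n, 0 < scale (aseq n) := fun n => scale_pos (by linarith [ha_le n])
  have hKc : ∀ n, K * scale (aseq n) ≤ 1 := fun n => mul_scale_le_one hK (hKa.trans (ha_le n))
  have key := bounds_of_scaled_recursion (c := fun n => scale (aseq n)) hC1.le hC2.le
    hc0 (fun n => scale_le_one (ha1.le.trans (ha_le n)))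
    (fun n => le_trans (mul_le_mul_of_nonneg_right (by simp [K]) (hc0 n).le) (hKc n))
    (fun n => le_trans (mul_le_mul_of_nonneg_right (by simp [K]) (hc0 n).le) (hKc n))
    (fun n => haseq_succ n ▸ scale_rpow_pow (haseq_nonneg n)) hp0 hq0
    (fun n => by simpa only [Nat.add_sub_cancel, hinv, h12] using hprec (n + 1) (by omega))
    (fun n => by simpa only [Nat.add_sub_cancel, hinv, h12] using hqrec (n + 1) (by omega))
    (h30 0 ▸ hp0') (h18 0 ▸ hq0')
  have hbounds : ∀ n, p n ≤ aseq n ^ ((5 / 2) * (1 - 7 / 6 : ℝ)) ∧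
      q n ≤ aseq n ^ ((3 / 2) * (1 - 7 / 6 : ℝ)) := fun n => by
    rw [h30, h18]; exact key n
  refine ⟨hbounds, tendsto_zero_of_le_rpow_pow (γ := 7 / 6) (s := 5 / 2 * (1 - 7 / 6)) ha1
    (by norm_num) (by norm_num) hp0 fun n => ?_⟩
  rw [← haseq]; exact (hbounds n).1
end
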